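/- Let v(t) = (V sin(w₀t), V sin(w₀t + 2π/3), V sin(w₀t − 2π/3)) with V > 0 (balanced negative-sequence voltage). Then ω_vec(t) = −(w₀/√3)·(1,1,1) and ρ(t) = 0 for all t. -/

import Mathlib

open scoped InnerProductSpace

noncomputable def cross3 (a b : EuclideanSpace ℝ (Fin 3)) : EuclideanSpace ℝ (Fin 3) :=
  WithLp.toLp 2 ![a 1 * b 2 - a 2 * b 1, a 2 * b 0 - a 0 * b 2, a 0 * b 1 - a 1 * b 0]

/-! With `s = sin θ`, `c = cos θ` the three phases are `s`, `-s/2 ± (√3/2) c`, so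
`‖v‖² = (3/2) V²` and `⟪v, v'⟫ = 0`: a balanced set has constant amplitude. Each coordinate of
`sin × cos` is `sin αᵢ cos αⱼ - sin αⱼ cos αᵢ = sin (αᵢ - αⱼ)`, a phase difference; for the negative
sequence all three differences have sine `-√3/2`, giving `ω = -(w₀/√3) (1, 1, 1)`. -/

open Real

lemma cos_two_pi_div_three : cos (2 * π / 3) = -(1 / 2) := by
  rw [show 2 * π / 3 = π - π / 3 by ring, cos_pi_sub, cos_pi_div_three]

lemma sin_two_pi_div_three : sin (2 * π / 3) = √3 / 2 := by
  rw [show 2 * π / 3 = π - π / 3 by ring, sin_pi_sub, sin_pi_div_three]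

lemma sin_four_pi_div_three : sin (4 * π / 3) = -(√3 / 2) := by
  rw [show 4 * π / 3 = π / 3 + π by ring, sin_add_pi, sin_pi_div_three]

lemma sin_add_two_pi_div_three (θ : ℝ) :
    sin (θ + 2 * π / 3) = -(sin θ / 2) + √3 / 2 * cos θ := by
  rw [sin_add, cos_two_pi_div_three, sin_two_pi_div_three]
  ring

lemma sin_sub_two_pi_div_three (θ : ℝ) :
    sin (θ - 2 * π / 3) = -(sin θ / 2) - √3 / 2 * cos θ := by
  rw [sin_sub, cos_two_pi_div_three, sin_two_pi_div_three]
  ring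

lemma cos_add_two_pi_div_three (θ : ℝ) :
    cos (θ + 2 * π / 3) = -(cos θ / 2) - √3 / 2 * sin θ := by
  rw [cos_add, cos_two_pi_div_three, sin_two_pi_div_three]
  ring

lemma cos_sub_two_pi_div_three (θ : ℝ) :
    cos (θ - 2 * π / 3) = -(cos θ / 2) + √3 / 2 * sin θ := by
  rw [cos_sub, cos_two_pi_div_three, sin_two_pi_div_three]
  ring

lemma sin_sq_add_sin_sq_add_sin_sq_three_phase (θ : ℝ) :
    sin θ ^ 2 + sin (θ + 2 * π / 3) ^ 2 + sin (θ - 2 * π / 3) ^ 2 = 3 / 2 := by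
  rw [sin_add_two_pi_div_three, sin_sub_two_pi_div_three]
  linear_combination (cos θ ^ 2 / 2) * sq_sqrt (show (0 : ℝ) ≤ 3 by norm_num) +
    3 / 2 * sin_sq_add_cos_sq θ

lemma sin_mul_cos_add_sin_mul_cos_add_sin_mul_cos_three_phase (θ : ℝ) :
    sin θ * cos θ + sin (θ + 2 * π / 3) * cos (θ + 2 * π / 3) +
      sin (θ - 2 * π / 3) * cos (θ - 2 * π / 3) = 0 := by
  rw [sin_add_two_pi_div_three, sin_sub_two_pi_div_three, cos_add_two_pi_div_three,
    cos_sub_two_pi_div_three]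
  linear_combination (-(sin θ * cos θ) / 2) * sq_sqrt (show (0 : ℝ) ≤ 3 by norm_num)

noncomputable def sinTriple (a b c : ℝ) : EuclideanSpace ℝ (Fin 3) :=
  WithLp.toLp 2 ![sin a, sin b, sin c]

noncomputable def cosTriple (a b c : ℝ) : EuclideanSpace ℝ (Fin 3) :=
  WithLp.toLp 2 ![cos a, cos b, cos c]

lemma norm_sinTriple_sq (a b c : ℝ) :
    ‖sinTriple a b c‖ ^ 2 = sin a ^ 2 + sin b ^ 2 + sin c ^ 2 := by
  simp [EuclideanSpace.real_norm_sq_eq, sinTriple, Fin.sum_univ_three]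

lemma inner_sinTriple_cosTriple (a b c : ℝ) :
    ⟪sinTriple a b c, cosTriple a b c⟫_ℝ = sin a * cos a + sin b * cos b + sin c * cos c := by
  simp [PiLp.inner_apply, sinTriple, cosTriple, Fin.sum_univ_three, mul_comm]

lemma cross3_sinTriple_cosTriple (a b c : ℝ) :
    cross3 (sinTriple a b c) (cosTriple a b c) =
      WithLp.toLp 2 ![sin (b - c), sin (c - a), sin (a - b)] := by
  ext i
  fin_cases i <;> simp [cross3, sinTriple, cosTriple, sin_sub, mul_comm]

lemma cross3_sinTriple_cosTriple_three_phase (θ : ℝ) :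
    cross3 (sinTriple θ (θ + 2 * π / 3) (θ - 2 * π / 3))
        (cosTriple θ (θ + 2 * π / 3) (θ - 2 * π / 3)) =
      (-(√3 / 2)) • (WithLp.toLp 2 ![1, 1, 1] : EuclideanSpace ℝ (Fin 3)) := by
  rw [cross3_sinTriple_cosTriple, show θ + 2 * π / 3 - (θ - 2 * π / 3) = 4 * π / 3 by ring]
  ext i
  fin_cases i <;> simp [sin_four_pi_div_three, sin_two_pi_div_three]

lemma cross3_smul_smul (r s : ℝ) (a b : EuclideanSpace ℝ (Fin 3)) :
    cross3 (r • a) (s • b) = (r * s) • cross3 a b := by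
  ext i
  fin_cases i <;> simp [cross3] <;> ring

lemma HasDerivAt.sinTriple {α β γ : ℝ → ℝ} {w t : ℝ} (hα : HasDerivAt α w t)
    (hβ : HasDerivAt β w t) (hγ : HasDerivAt γ w t) :
    HasDerivAt (fun t => sinTriple (α t) (β t) (γ t)) (w • cosTriple (α t) (β t) (γ t)) t := by
  have hpi : HasDerivAt (fun t => ![Real.sin (α t), Real.sin (β t), Real.sin (γ t)])
      (![w * Real.cos (α t), w * Real.cos (β t), w * Real.cos (γ t)]) t := by
    rw [hasDerivAt_pi]
    intro i
    fin_cases i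
    · simpa [mul_comm] using hα.sin
    · simpa [mul_comm] using hβ.sin
    · simpa [mul_comm] using hγ.sin
  refine ((EuclideanSpace.equiv (Fin 3) ℝ).symm.toContinuousLinearMap.hasFDerivAt.comp_hasDerivAt
    t hpi).congr_deriv ?_
  ext i
  fin_cases i <;> simp [cosTriple]

theorem negative_sequence_invariants (V w₀ : ℝ) (hV : 0 < V)
    (v : ℝ → EuclideanSpace ℝ (Fin 3))
    (hv : v = fun t => (WithLp.toLp 2 ![V * Real.sin (w₀ * t), V * Real.sin (w₀ * t + 2 * Real.pi / 3),
      V * Real.sin (w₀ * t - 2 * Real.pi / 3)] : EuclideanSpace ℝ (Fin 3))) (t : ℝ) :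
    (‖v t‖ ^ 2)⁻¹ • cross3 (v t) (deriv v t) =
      (-(w₀ / Real.sqrt 3)) • (WithLp.toLp 2 (![1, 1, 1] : Fin 3 → ℝ) : EuclideanSpace ℝ (Fin 3)) ∧
    ⟪v t, deriv v t⟫_ℝ / ‖v t‖ ^ 2 = 0 := by
  set θ := w₀ * t
  have hv_smul : v = fun t => V • sinTriple (w₀ * t) (w₀ * t + 2 * π / 3) (w₀ * t - 2 * π / 3) := by
    subst hv
    ext t i
    fin_cases i <;> simp [sinTriple]
  have hderiv : deriv v t = (V * w₀) • cosTriple θ (θ + 2 * π / 3) (θ - 2 * π / 3) := by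
    have hθ : HasDerivAt (fun t => w₀ * t) w₀ t := by simpa using (hasDerivAt_id t).const_mul w₀
    rw [hv_smul, mul_smul]
    exact ((hθ.sinTriple (hθ.add_const _) (hθ.sub_const _)).const_smul V).deriv
  have hnorm : ‖v t‖ ^ 2 = 3 / 2 * V ^ 2 := by
    rw [hv_smul, norm_smul, mul_pow, norm_sinTriple_sq, sin_sq_add_sin_sq_add_sin_sq_three_phase,
      Real.norm_eq_abs, sq_abs, mul_comm]
  rw [hnorm, hderiv, hv_smul]
  constructor
  · rw [cross3_smul_smul, cross3_sinTriple_cosTriple_three_phase, smul_smul, smul_smul]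
    congr 1
    have hV0 : V ≠ 0 := hV.ne'
    field_simp
    rw [sq_sqrt (by norm_num)]
    ring
  · rw [real_inner_smul_left, real_inner_smul_right, inner_sinTriple_cosTriple,
      sin_mul_cos_add_sin_mul_cos_add_sin_mul_cos_three_phase]
    simp
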